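/- In the goal-oriented setting, with the dual norms induced by a symmetric positive definite matrix G*, for every n ∈ {1, …, N} one has | lᵀ eⁿ − Δt·∑_{k=0}^{n−1} (r^{k+1})ᵀ Ψ̃^{N−n+k} | ≤ ( ∑_{k=0}^{n−1} Δt·‖r^{k+1}‖₋₁² )^{1/2} · ( ∑_{k=0}^{n−1} Δt·‖ε^{N−n+k}‖²_{G*} )^{1/2}. -/

import Mathlib

/-!
Testing the primal error equation against the exact dual solution and telescoping in time gives
the dual-weighted residual identity `lᵀ eⁿ = Δt ∑ (r^{k+1})ᵀ Ψ^{N-n+k}`, so the quantity to be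
bounded is `Δt ∑ (r^{k+1})ᵀ ε^{N-n+k}`. Each term is at most `‖r^{k+1}‖₋₁ ‖ε^{N-n+k}‖_{G*}` by the
definition of the dual norm, and the discrete Cauchy–Schwarz inequality in time concludes.
-/

open Matrix BigOperators Finset

/-- The energy norm `‖v‖_{G*} = √(vᵀ G* v)` induced by a matrix `G`. -/
noncomputable def normG {d : ℕ} (G : Matrix (Fin d) (Fin d) ℝ) (v : Fin d → ℝ) : ℝ :=
  Real.sqrt (v ⬝ᵥ G.mulVec v)

/-- The dual norm `‖r‖₋₁ = sup_{v ≠ 0} (rᵀ v)/‖v‖_{G*}`. -/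
noncomputable def dualNorm {d : ℕ} (G : Matrix (Fin d) (Fin d) ℝ) (r : Fin d → ℝ) : ℝ :=
  ⨆ v : {v : Fin d → ℝ // v ≠ 0}, (r ⬝ᵥ (v : Fin d → ℝ)) / normG G (v : Fin d → ℝ)

/-- The symmetric part `(A + Aᵀ)/2` of a matrix. -/
noncomputable def symPart {d : ℕ} (A : Matrix (Fin d) (Fin d) ℝ) : Matrix (Fin d) (Fin d) ℝ :=
  ((1 : ℝ)/2) • (A + Aᵀ)

lemma mul_sum_mul_le_sqrt_mul_sqrt {ι : Type*} (s : Finset ι) {c : ℝ} (hc : 0 ≤ c)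
    (f g : ι → ℝ) :
    c * ∑ i ∈ s, f i * g i ≤ √(∑ i ∈ s, c * f i ^ 2) * √(∑ i ∈ s, c * g i ^ 2) := by
  rw [← mul_sum, ← mul_sum, Real.sqrt_mul hc, Real.sqrt_mul hc, mul_mul_mul_comm,
    Real.mul_self_sqrt hc]
  exact mul_le_mul_of_nonneg_left (Real.sum_mul_le_sqrt_mul_sqrt s f g) hc

section EnergyNorm

variable {d : ℕ} {G : Matrix (Fin d) (Fin d) ℝ}

lemma dotProduct_mulVec_comm_of_transpose_eq (hG : Gᵀ = G) (u v : Fin d → ℝ) :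
    v ⬝ᵥ G *ᵥ u = u ⬝ᵥ G *ᵥ v := by
  rw [dotProduct_mulVec, ← mulVec_transpose, hG, dotProduct_comm]

lemma dotProduct_mulVec_le_normG_mul_normG (hG : G.PosSemidef) (u v : Fin d → ℝ) :
    u ⬝ᵥ G *ᵥ v ≤ normG G u * normG G v := by
  have hGT : Gᵀ = G := by simpa using hG.1.eq
  have hnonneg (x : Fin d → ℝ) : 0 ≤ x ⬝ᵥ G *ᵥ x := by
    simpa using hG.dotProduct_mulVec_nonneg x
  have hcs := LinearMap.BilinForm.apply_mul_apply_le_of_forall_zero_le (toLinearMap₂' ℝ G)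
    (fun x => by simpa only [toLinearMap₂'_apply'] using hnonneg x) u v
  simp only [toLinearMap₂'_apply', dotProduct_mulVec_comm_of_transpose_eq hGT u v] at hcs
  rw [normG, normG, ← Real.sqrt_mul (hnonneg u)]
  exact (le_abs_self _).trans (Real.abs_le_sqrt (by rwa [sq]))

lemma normG_pos (hG : G.PosDef) {v : Fin d → ℝ} (hv : v ≠ 0) : 0 < normG G v :=
  Real.sqrt_pos.2 (by simpa using hG.dotProduct_mulVec_pos hv)

lemma normG_neg (v : Fin d → ℝ) : normG G (-v) = normG G v := by
  simp [normG, mulVec_neg, dotProduct_neg, neg_dotProduct]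

/-- The Riesz representer `G⁻¹ r` bounds every quotient in the supremum. -/
lemma dualNorm_bddAbove (hG : G.PosDef) (r : Fin d → ℝ) :
    BddAbove (Set.range fun v : {v : Fin d → ℝ // v ≠ 0} => (r ⬝ᵥ v.1) / normG G v.1) := by
  have hGT : Gᵀ = G := by simpa using hG.1.eq
  have hGw : G *ᵥ (G⁻¹ *ᵥ r) = r := by
    rw [mulVec_mulVec, mul_nonsing_inv _ (isUnit_iff_ne_zero.2 hG.det_pos.ne'), one_mulVec]
  refine ⟨normG G (G⁻¹ *ᵥ r), ?_⟩
  rintro x ⟨⟨v, hv⟩, rfl⟩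
  rw [div_le_iff₀ (normG_pos hG hv)]
  calc r ⬝ᵥ v = G⁻¹ *ᵥ r ⬝ᵥ G *ᵥ v := by
        rw [← dotProduct_mulVec_comm_of_transpose_eq hGT, hGw, dotProduct_comm]
    _ ≤ normG G (G⁻¹ *ᵥ r) * normG G v := dotProduct_mulVec_le_normG_mul_normG hG.posSemidef _ _

lemma dotProduct_le_dualNorm_mul_normG (hG : G.PosDef) (r v : Fin d → ℝ) :
    r ⬝ᵥ v ≤ dualNorm G r * normG G v := by
  rcases eq_or_ne v 0 with rfl | hv
  · simp [normG]
  · rw [← div_le_iff₀ (normG_pos hG hv)]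
    exact le_ciSup (dualNorm_bddAbove hG r) (⟨v, hv⟩ : {v : Fin d → ℝ // v ≠ 0})

lemma abs_dotProduct_le_dualNorm_mul_normG (hG : G.PosDef) (r v : Fin d → ℝ) :
    |r ⬝ᵥ v| ≤ dualNorm G r * normG G v := by
  have hneg := dotProduct_le_dualNorm_mul_normG hG r (-v)
  rw [dotProduct_neg, normG_neg] at hneg
  exact abs_le.2 ⟨by linarith, dotProduct_le_dualNorm_mul_normG hG r v⟩

lemma abs_mul_sum_dotProduct_le {ι : Type*} (hG : G.PosDef) {c : ℝ} (hc : 0 ≤ c)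
    (s : Finset ι) (r v : ι → Fin d → ℝ) :
    |c * ∑ i ∈ s, r i ⬝ᵥ v i| ≤
      √(∑ i ∈ s, c * dualNorm G (r i) ^ 2) * √(∑ i ∈ s, c * normG G (v i) ^ 2) := by
  rw [abs_mul, abs_of_nonneg hc]
  calc c * |∑ i ∈ s, r i ⬝ᵥ v i|
      ≤ c * ∑ i ∈ s, dualNorm G (r i) * normG G (v i) := by
        gcongr
        exact (abs_sum_le_sum_abs _ _).trans
          (sum_le_sum fun i _ => abs_dotProduct_le_dualNorm_mul_normG hG _ _)
    _ ≤ _ := mul_sum_mul_le_sqrt_mul_sqrt s hc _ _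

end EnergyNorm

section DualWeightedResidual

variable {d : ℕ} {M A : Matrix (Fin d) (Fin d) ℝ} {Δt : ℝ} {e r Φ : ℕ → Fin d → ℝ}

lemma dotProduct_mulVec_succ_of_primal_dual (hM : Mᵀ = M) {k : ℕ}
    (hprimal : (M + Δt • A) *ᵥ e (k + 1) = M *ᵥ e k - Δt • r (k + 1))
    (hdual : (M + Δt • Aᵀ) *ᵥ Φ k = M *ᵥ Φ (k + 1)) :
    Φ (k + 1) ⬝ᵥ M *ᵥ e (k + 1) = Φ k ⬝ᵥ M *ᵥ e k - Δt * (r (k + 1) ⬝ᵥ Φ k) := by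
  have hMA : (M + Δt • A)ᵀ = M + Δt • Aᵀ := by
    rw [transpose_add, transpose_smul, hM]
  calc Φ (k + 1) ⬝ᵥ M *ᵥ e (k + 1)
      = M *ᵥ Φ (k + 1) ⬝ᵥ e (k + 1) := by
        rw [← dotProduct_mulVec_comm_of_transpose_eq hM, dotProduct_comm]
    _ = Φ k ⬝ᵥ (M + Δt • A) *ᵥ e (k + 1) := by
        rw [← hdual, ← hMA, mulVec_transpose, dotProduct_mulVec]
    _ = Φ k ⬝ᵥ M *ᵥ e k - Δt * (r (k + 1) ⬝ᵥ Φ k) := by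
        rw [hprimal, dotProduct_sub, dotProduct_smul, smul_eq_mul,
          dotProduct_comm (Φ k) (r (k + 1))]

theorem dotProduct_mulVec_eq_neg_mul_sum_of_primal_dual (hM : Mᵀ = M) (he0 : e 0 = 0) {n : ℕ}
    (hprimal : ∀ k < n, (M + Δt • A) *ᵥ e (k + 1) = M *ᵥ e k - Δt • r (k + 1))
    (hdual : ∀ k < n, (M + Δt • Aᵀ) *ᵥ Φ k = M *ᵥ Φ (k + 1)) :
    Φ n ⬝ᵥ M *ᵥ e n = -(Δt * ∑ k ∈ range n, r (k + 1) ⬝ᵥ Φ k) := by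
  induction n with
  | zero => simp [he0]
  | succ n ih =>
    rw [dotProduct_mulVec_succ_of_primal_dual hM (hprimal n n.lt_succ_self)
        (hdual n n.lt_succ_self), ih (fun k hk => hprimal k (hk.trans n.lt_succ_self))
        (fun k hk => hdual k (hk.trans n.lt_succ_self)), sum_range_succ]
    ring

end DualWeightedResidual

theorem stmt14_general {d : ℕ}
    (G M A : Matrix (Fin d) (Fin d) ℝ) (hG : G.PosDef) (hM : M.PosSemidef)
    (Δt : ℝ) (hΔt : 0 < Δt) (N : ℕ)
    (e r : ℕ → Fin d → ℝ) (he0 : e 0 = 0)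
    (hprimal : ∀ k, 1 ≤ k → k ≤ N →
      (M + Δt • A).mulVec (e k) = M.mulVec (e (k - 1)) - Δt • r k)
    (l : Fin d → ℝ)
    (Ψ Ψt : ℕ → Fin d → ℝ)
    (hΨN : M.mulVec (Ψ N) = -l)
    (hΨ : ∀ k, k < N → (M + Δt • Aᵀ).mulVec (Ψ k) = M.mulVec (Ψ (k + 1)))
    (ε : ℕ → Fin d → ℝ)
    (hε : ∀ k, ε k = Ψ k - Ψt k)
    (n : ℕ) (hnN : n ≤ N) :
    |l ⬝ᵥ e n - Δt * ∑ k ∈ Finset.range n, r (k + 1) ⬝ᵥ Ψt (N - n + k)| ≤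
      Real.sqrt (∑ k ∈ Finset.range n, Δt * (dualNorm G (r (k + 1)))^2) *
        Real.sqrt (∑ k ∈ Finset.range n, Δt * (normG G (ε (N - n + k)))^2) := by
  have hMT : Mᵀ = M := by simpa using hM.1.eq
  have hrep : l ⬝ᵥ e n = Δt * ∑ k ∈ range n, r (k + 1) ⬝ᵥ Ψ (N - n + k) := by
    have h := dotProduct_mulVec_eq_neg_mul_sum_of_primal_dual (n := n) (Φ := fun k => Ψ (N - n + k))
      hMT he0 (fun k hk => by simpa using hprimal (k + 1) (by omega) (by omega))
      (fun k hk => by simpa [add_assoc] using hΨ (N - n + k) (by omega))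
    rw [Nat.sub_add_cancel hnN, ← dotProduct_mulVec_comm_of_transpose_eq hMT, dotProduct_comm,
      hΨN, neg_dotProduct] at h
    linarith
  have hdiff : l ⬝ᵥ e n - Δt * ∑ k ∈ range n, r (k + 1) ⬝ᵥ Ψt (N - n + k) =
      Δt * ∑ k ∈ range n, r (k + 1) ⬝ᵥ ε (N - n + k) := by
    simp only [hrep, hε, dotProduct_sub, sum_sub_distrib, mul_sub]
  rw [hdiff]
  exact abs_mul_sum_dotProduct_le hG hΔt.le _ _ _

theorem stmt14 {d : ℕ} (hd : 1 ≤ d)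
    (G M A : Matrix (Fin d) (Fin d) ℝ) (hG : G.PosDef) (hM : M.PosSemidef)
    (Δt : ℝ) (hΔt : 0 < Δt) (N : ℕ) (hN : 1 ≤ N)
    (e r : ℕ → Fin d → ℝ) (he0 : e 0 = 0)
    (hprimal : ∀ k, 1 ≤ k → k ≤ N →
      (M + Δt • A).mulVec (e k) = M.mulVec (e (k - 1)) - Δt • r k)
    (l : Fin d → ℝ)
    (Ψ Ψt : ℕ → Fin d → ℝ)
    (hΨN : M.mulVec (Ψ N) = -l)
    (hΨ : ∀ k, k < N → (M + Δt • Aᵀ).mulVec (Ψ k) = M.mulVec (Ψ (k + 1)))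
    (hΨtN : Ψt N = Ψ N)
    (ε ϱ : ℕ → Fin d → ℝ)
    (hε : ∀ k, ε k = Ψ k - Ψt k)
    (hϱ : ∀ k, k < N →
      ϱ k = (1 / Δt) • ((M + Δt • Aᵀ).mulVec (Ψt k) - M.mulVec (Ψt (k + 1))))
    (n : ℕ) (hn1 : 1 ≤ n) (hnN : n ≤ N) :
    |l ⬝ᵥ e n - Δt * ∑ k ∈ Finset.range n, r (k + 1) ⬝ᵥ Ψt (N - n + k)| ≤
      Real.sqrt (∑ k ∈ Finset.range n, Δt * (dualNorm G (r (k + 1)))^2) *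
        Real.sqrt (∑ k ∈ Finset.range n, Δt * (normG G (ε (N - n + k)))^2) :=
  stmt14_general G M A hG hM Δt hΔt N e r he0 hprimal l Ψ Ψt hΨN hΨ ε hε n hnN
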